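/- arXiv:0707.1177 — 3 statements merged into one kernel-verified Lean document; each statement's English description precedes it below -/
import Mathlib

section
/- Let S ⊆ ℝ^n be Lebesgue measurable and suppose no two points of S at Euclidean distance exactly 1 differ by a unit vector with all rational coordinates (i.e., S is an independent set in the graph T_{ℚ^n}). If y is a point of Lebesgue density 1 of S and x ∈ ℝ^n satisfies ‖x - y‖ = 1, then the Lebesgue density of S at x is 0. -/
open MeasureTheory Metric Filter
open scoped ENNReal

/-- A point of `ℝ^n` has all rational coordinates. -/
def RatPt {n : ℕ} (x : EuclideanSpace ℝ (Fin n)) : Prop := ∀ i, ∃ q : ℚ, x i = (q : ℝ)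

/-- The graph `T_{ℚ^n}`: vertices are points of `ℝ^n`, with an edge between `u` and `v`
iff `u - v` is a rational unit vector. -/
def TQ (n : ℕ) : SimpleGraph (EuclideanSpace ℝ (Fin n)) :=
  SimpleGraph.fromRel (fun u v => RatPt (u - v) ∧ dist u v = 1)

/-- `S` has Lebesgue density `d` at `x`. -/
def HasDensity {n : ℕ} (S : Set (EuclideanSpace ℝ (Fin n))) (x : EuclideanSpace ℝ (Fin n))
    (d : ℝ≥0∞) : Prop :=
  Tendsto (fun ε : ℝ => volume (S ∩ ball x ε) / volume (ball x ε))
    (nhdsWithin 0 (Set.Ioi 0)) (nhds d)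

/-!
Pick a rational unit vector `q` with `‖q - (x - y)‖ < ε`. For `z ∈ S ∩ ball x ε` the point
`z - q` is adjacent to `z`, hence outside `S`, and it lies in `ball y (2 * ε)`; translating gives
`|S ∩ ball x ε| ≤ |ball y (2 * ε) \ S|`, which is `o(εⁿ)` because `y` is a density point of `S`.
Such `q` exist because rational unit vectors are dense in the sphere: the reflection through
`(p - v)ᗮ` sends a rational pole `p` to `v`, is a rational expression in `p - v`, and is
continuous in it.
-/

open Topology InnerProductSpace Submodule

theorem reflection_orthogonal_singleton_apply {E : Type*} [NormedAddCommGroup E]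
    [InnerProductSpace ℝ E] (u p : E) :
    reflection (ℝ ∙ u)ᗮ p = p - (2 * (⟪u, p⟫_ℝ / ‖u‖ ^ 2)) • u := by
  rw [reflection_orthogonal_apply, reflection_singleton_apply, mul_smul, two_smul ℕ, two_smul ℝ]
  simp

theorem continuousAt_reflection_orthogonal_singleton {E : Type*} [NormedAddCommGroup E]
    [InnerProductSpace ℝ E] {u : E} (hu : u ≠ 0) (p : E) :
    ContinuousAt (fun u => reflection (ℝ ∙ u)ᗮ p) u := by
  simp only [reflection_orthogonal_singleton_apply]
  have : ‖u‖ ^ 2 ≠ 0 := by positivity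
  fun_prop (disch := assumption)

variable {n : ℕ}

theorem ratPt_iff {x : EuclideanSpace ℝ (Fin n)} :
    RatPt x ↔ ∀ i, x i ∈ (Rat.castHom ℝ).fieldRange := by
  simp only [RatPt, RingHom.mem_fieldRange, Rat.coe_castHom, eq_comm]

theorem RatPt.inner_mem_fieldRange {x y : EuclideanSpace ℝ (Fin n)} (hx : RatPt x) (hy : RatPt y) :
    ⟪x, y⟫_ℝ ∈ (Rat.castHom ℝ).fieldRange := by
  rw [ratPt_iff] at hx hy
  simp only [PiLp.inner_apply, RCLike.inner_apply, conj_trivial]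
  exact sum_mem fun i _ => mul_mem (hy i) (hx i)

theorem RatPt.sub_smul {x y : EuclideanSpace ℝ (Fin n)} (hx : RatPt x) (hy : RatPt y) {c : ℝ}
    (hc : c ∈ (Rat.castHom ℝ).fieldRange) : RatPt (x - c • y) := by
  rw [ratPt_iff] at hx hy ⊢
  intro i
  simpa using sub_mem (hx i) (mul_mem hc (hy i))

theorem dense_setOf_ratPt : Dense {x : EuclideanSpace ℝ (Fin n) | RatPt x} := by
  have hpi : Dense (Set.univ.pi fun _ : Fin n => Set.range ((↑) : ℚ → ℝ)) :=
    dense_pi _ fun _ _ => Rat.denseRange_cast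
  convert hpi.preimage (EuclideanSpace.equiv (Fin n) ℝ).toHomeomorph.isOpenMap using 1
  ext x
  simp [RatPt, eq_comm]

theorem ratPt_single (i : Fin n) : RatPt (EuclideanSpace.single i (1 : ℝ)) := fun j =>
  ⟨if j = i then 1 else 0, by split_ifs <;> simp [*]⟩

theorem sphere_subset_closure_ratPt :
    sphere (0 : EuclideanSpace ℝ (Fin n)) 1 ⊆ closure {q | RatPt q ∧ ‖q‖ = 1} := by
  intro v hv
  rw [mem_sphere_zero_iff_norm] at hv
  have : Nonempty (Fin n) := by
    by_contra h
    rw [not_nonempty_iff] at h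
    simp [Subsingleton.elim v 0] at hv
  let p := EuclideanSpace.single (Classical.arbitrary (Fin n)) (1 : ℝ)
  have hp : RatPt p ∧ ‖p‖ = 1 := ⟨ratPt_single _, by simp [p]⟩
  obtain rfl | hpv := eq_or_ne v p
  · exact subset_closure hp
  let f : EuclideanSpace ℝ (Fin n) → EuclideanSpace ℝ (Fin n) := fun u => reflection (ℝ ∙ u)ᗮ p
  have hfv : f (p - v) = v := reflection_sub (hp.2.trans hv.symm)
  have hmem : f (p - v) ∈ closure (f '' {u | RatPt u}) :=
    mem_closure_image (continuousAt_reflection_orthogonal_singleton (sub_ne_zero.2 hpv.symm) p)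
      (dense_setOf_ratPt.closure_eq ▸ Set.mem_univ (p - v))
  rw [hfv] at hmem
  refine closure_mono ?_ hmem
  rintro _ ⟨u, hu, rfl⟩
  refine ⟨?_, by simp [f, hp.2]⟩
  rw [show f u = _ from reflection_orthogonal_singleton_apply u p]
  exact hp.1.sub_smul hu (mul_mem (by simp) (div_mem (hu.inner_mem_fieldRange hp.1)
    (by simpa [real_inner_self_eq_norm_sq] using hu.inner_mem_fieldRange hu)))

theorem TQ_adj_add_of_ratPt {q : EuclideanSpace ℝ (Fin n)} (hq : RatPt q) (hq1 : ‖q‖ = 1)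
    (w : EuclideanSpace ℝ (Fin n)) : (TQ n).Adj (w + q) w := by
  have hq0 : q ≠ 0 := by rintro rfl; simp at hq1
  rw [TQ, SimpleGraph.fromRel_adj]
  exact ⟨by simpa using hq0, Or.inl ⟨by simpa using hq, by simpa [dist_eq_norm] using hq1⟩⟩

theorem volume_inter_ball_le_volume_compl_inter_ball {S : Set (EuclideanSpace ℝ (Fin n))}
    (hind : ∀ u ∈ S, ∀ v ∈ S, ¬ (TQ n).Adj u v) {x y : EuclideanSpace ℝ (Fin n)}
    (hxy : ‖x - y‖ = 1) {ε : ℝ} (hε : 0 < ε) :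
    volume (S ∩ ball x ε) ≤ volume (Sᶜ ∩ ball y (2 * ε)) := by
  obtain ⟨q, ⟨hq, hq1⟩, hqxy⟩ := Metric.mem_closure_iff.1
    (sphere_subset_closure_ratPt (mem_sphere_zero_iff_norm.2 hxy)) ε hε
  calc volume (S ∩ ball x ε) = volume ((· + q) ⁻¹' (S ∩ ball x ε)) :=
        (measure_preimage_add_right _ _ _).symm
    _ ≤ volume (Sᶜ ∩ ball y (2 * ε)) := by
      refine measure_mono fun w ⟨hwS, hwx⟩ => ⟨fun hw => hind _ hwS w hw
        (TQ_adj_add_of_ratPt hq hq1 w), ?_⟩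
      rw [mem_ball, dist_eq_norm] at hwx ⊢
      rw [dist_eq_norm] at hqxy
      calc ‖w - y‖ = ‖(w + q - x) + (x - y - q)‖ := by congr 1; abel
        _ ≤ ‖w + q - x‖ + ‖x - y - q‖ := norm_add_le _ _
        _ < ε + ε := add_lt_add hwx hqxy
        _ = 2 * ε := by ring

theorem HasDensity.compl {S : Set (EuclideanSpace ℝ (Fin n))} (hS : NullMeasurableSet S volume)
    {x : EuclideanSpace ℝ (Fin n)} {d : ℝ≥0∞} (h : HasDensity S x d) :
    HasDensity Sᶜ x (1 - d) := by
  refine (ENNReal.Tendsto.sub tendsto_const_nhds h (.inl ENNReal.one_ne_top)).congr' ?_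
  filter_upwards [self_mem_nhdsWithin] with ε (hε : 0 < ε)
  have hB : volume (ball x ε) ≠ 0 := (measure_ball_pos volume x hε).ne'
  have hSB : volume (S ∩ ball x ε) ≠ ∞ := measure_ne_top_of_subset Set.inter_subset_right
    measure_ball_lt_top.ne
  rw [← ENNReal.div_self hB measure_ball_lt_top.ne, ← ENNReal.sub_div fun _ _ => hB,
    ← measure_inter_add_sdiff₀ (ball x ε) hS, Set.inter_comm, ENNReal.add_sub_cancel_left hSB,
    Set.sdiff_eq, Set.inter_comm]

theorem HasDensity.tendsto_zero_mul_radius [Nontrivial (EuclideanSpace ℝ (Fin n))]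
    {T : Set (EuclideanSpace ℝ (Fin n))} {y : EuclideanSpace ℝ (Fin n)} (h : HasDensity T y 0)
    (x : EuclideanSpace ℝ (Fin n)) {c : ℝ} (hc : 0 < c) :
    Tendsto (fun ε : ℝ => volume (T ∩ ball y (c * ε)) / volume (ball x ε)) (𝓝[>] 0) (𝓝 0) := by
  have hcε : Tendsto (c * ·) (𝓝[>] (0 : ℝ)) (𝓝[>] 0) :=
    tendsto_nhdsWithin_of_tendsto_nhds_of_eventually_within _
      ((continuous_const_mul c).tendsto' 0 0 (mul_zero c) |>.mono_left nhdsWithin_le_nhds)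
      (eventually_nhdsWithin_of_forall fun ε (hε : 0 < ε) => mul_pos hc hε)
  have hk : ENNReal.ofReal (c ^ n) ≠ ∞ := ENNReal.ofReal_ne_top
  have hk0 : ENNReal.ofReal (c ^ n) ≠ 0 := by positivity
  simpa using (ENNReal.Tendsto.const_mul (h.comp hcε) (.inr hk)).congr fun ε => by
    rw [Function.comp_apply, Measure.addHaar_ball_mul volume y hc.le, finrank_euclideanSpace_fin,
      ← Measure.addHaar_ball_center volume x, ← mul_div_assoc, ENNReal.mul_div_mul_left _ _ hk0 hk]

theorem density_zero_at_unit_distance_general {n : ℕ}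
    (S : Set (EuclideanSpace ℝ (Fin n))) (hS : NullMeasurableSet S volume)
    (hind : ∀ u ∈ S, ∀ v ∈ S, ¬ (TQ n).Adj u v)
    (x y : EuclideanSpace ℝ (Fin n)) (hy : HasDensity S y 1) (hxy : ‖x - y‖ = 1) :
    HasDensity S x 0 := by
  have : Nontrivial (EuclideanSpace ℝ (Fin n)) :=
    nontrivial_of_ne x y fun h => by simp [h] at hxy
  have hcompl : HasDensity Sᶜ y 0 := by simpa using hy.compl hS
  refine tendsto_of_tendsto_of_tendsto_of_le_of_le' tendsto_const_nhds
    (hcompl.tendsto_zero_mul_radius x two_pos) (Eventually.of_forall fun _ => zero_le) ?_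
  filter_upwards [self_mem_nhdsWithin] with ε hε
  exact ENNReal.div_le_div_right (volume_inter_ball_le_volume_compl_inter_ball hind hxy hε) _

/-- If `S` is a measurable independent set of `T_{ℚ^n}`, `y` is a density-1 point of `S`,
and `x` is at unit distance from `y`, then `S` has density `0` at `x`. -/
theorem density_zero_at_unit_distance {n : ℕ} (hn : 2 ≤ n)
    (S : Set (EuclideanSpace ℝ (Fin n))) (hS : NullMeasurableSet S volume)
    (hind : ∀ u ∈ S, ∀ v ∈ S, ¬ (TQ n).Adj u v)
    (x y : EuclideanSpace ℝ (Fin n)) (hy : HasDensity S y 1) (hxy : ‖x - y‖ = 1) :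
    HasDensity S x 0 :=
  density_zero_at_unit_distance_general S hS hind x y hy hxy
end

section
/- If S ⊆ ℝ^n is an independent set in T_{ℚ^n} (no two points of S differ by a rational unit vector), S is measurable, and x, y ∈ ℝ^n with ‖x - y‖ = 1, then for all sufficiently small ε > 0 and all x' with x' - y ∈ ℚ^n, ‖x' - y‖ = 1, we have μ(B_ε(y) ∩ S) + μ(B_ε(x') ∩ S) ≤ μ(B_ε(y)), where μ is Lebesgue measure. -/
open MeasureTheory Metric Filter

open scoped Pointwise

theorem measure_inter_add_measure_vadd_inter_le {G : Type*} [MeasurableSpace G] [AddGroup G]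
    {μ : Measure G} [μ.IsAddLeftInvariant] {S : Set G}
    (hS : NullMeasurableSet S μ) {v : G} (hv : Disjoint (v +ᵥ S) S) (B : Set G) :
    μ (B ∩ S) + μ ((v +ᵥ B) ∩ S) ≤ μ B := by
  have hsub : v +ᵥ (B ∩ S) ⊆ (v +ᵥ B) \ S := fun _ hw =>
    ⟨Set.vadd_set_mono Set.inter_subset_left hw,
      hv.subset_compl_right (Set.vadd_set_mono Set.inter_subset_right hw)⟩
  calc μ (B ∩ S) + μ ((v +ᵥ B) ∩ S)
      = μ (v +ᵥ (B ∩ S)) + μ ((v +ᵥ B) ∩ S) := by rw [measure_vadd]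
    _ ≤ μ ((v +ᵥ B) \ S) + μ ((v +ᵥ B) ∩ S) := by gcongr
    _ = μ B := by rw [add_comm, measure_inter_add_sdiff₀ _ hS, measure_vadd]

theorem TQ.adj_add_self {n : ℕ} {v : EuclideanSpace ℝ (Fin n)} (hv : RatPt v) (hv₁ : ‖v‖ = 1)
    (u : EuclideanSpace ℝ (Fin n)) : (TQ n).Adj (v + u) u := by
  refine ⟨fun h => ?_, Or.inl ⟨by rwa [add_sub_cancel_right],
    by rwa [dist_eq_norm, add_sub_cancel_right]⟩⟩
  rw [add_eq_right] at h
  simp [h] at hv₁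

theorem TQ.disjoint_vadd_self {n : ℕ} {S : Set (EuclideanSpace ℝ (Fin n))}
    (hind : ∀ u ∈ S, ∀ v ∈ S, ¬ (TQ n).Adj u v) {v : EuclideanSpace ℝ (Fin n)}
    (hv : RatPt v) (hv₁ : ‖v‖ = 1) : Disjoint (v +ᵥ S) S :=
  Set.disjoint_left.2 fun _ ⟨u, hu, hvu⟩ hvuS =>
    hind _ hvuS u hu (hvu ▸ TQ.adj_add_self hv hv₁ u)

theorem ball_measure_sum_le_general {n : ℕ}
    (S : Set (EuclideanSpace ℝ (Fin n))) (hS : NullMeasurableSet S volume)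
    (hind : ∀ u ∈ S, ∀ v ∈ S, ¬ (TQ n).Adj u v)
    (y : EuclideanSpace ℝ (Fin n)) :
    ∃ ε₀ > (0 : ℝ), ∀ ε, 0 < ε → ε < ε₀ →
      ∀ x' : EuclideanSpace ℝ (Fin n), RatPt (x' - y) → ‖x' - y‖ = 1 →
        volume (ball y ε ∩ S) + volume (ball x' ε ∩ S) ≤ volume (ball y ε) := by
  refine ⟨1, one_pos, fun ε _ _ x' hrat hnorm => ?_⟩
  have hball : ball x' ε = (x' - y) +ᵥ ball y ε := by
    rw [vadd_ball, vadd_eq_add, sub_add_cancel]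
  rw [hball]
  exact measure_inter_add_measure_vadd_inter_le hS (TQ.disjoint_vadd_self hind hrat hnorm) _

/-- For a measurable independent set `S` of `T_{ℚ^n}` and `x, y` at unit distance,
for all sufficiently small `ε > 0` and every neighbour `x'` of `y` in `T_{ℚ^n}`,
`μ(B_ε(y) ∩ S) + μ(B_ε(x') ∩ S) ≤ μ(B_ε(y))`. -/
theorem ball_measure_sum_le {n : ℕ} (hn : 2 ≤ n)
    (S : Set (EuclideanSpace ℝ (Fin n))) (hS : NullMeasurableSet S volume)
    (hind : ∀ u ∈ S, ∀ v ∈ S, ¬ (TQ n).Adj u v)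
    (x y : EuclideanSpace ℝ (Fin n)) (hxy : ‖x - y‖ = 1) :
    ∃ ε₀ > (0 : ℝ), ∀ ε, 0 < ε → ε < ε₀ →
      ∀ x' : EuclideanSpace ℝ (Fin n), RatPt (x' - y) → ‖x' - y‖ = 1 →
        volume (ball y ε ∩ S) + volume (ball x' ε ∩ S) ≤ volume (ball y ε) :=
  ball_measure_sum_le_general S hS hind y
end

section
/- In the unit distance graph on ℚ^3, there is a proper 2-coloring; hence χ(ℚ^3) = 2. -/
/-- The unit distance graph on `ℚ³`. -/
def QQ3 : SimpleGraph (Fin 3 → ℚ) :=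
  SimpleGraph.fromRel (fun u v => ∑ i, (u i - v i) ^ 2 = 1)

/-!
If `x ∈ ℚ³` is a unit vector with least common denominator `D`, write `x = A / D`, so that
`A₁² + A₂² + A₃² = D²`. Squares are `0` or `1` mod `4`, so an even `D` would force every `Aᵢ` to
be even, against minimality: `D` is odd. Thus unit vectors lie in the group `K` of vectors with
odd denominators, and reducing `∑ Aᵢ² = D²` mod `2` shows that the homomorphism `χ : K → ℤ/2`,
`v ↦ ∑ numᵢ`, sends them to `1`. Colouring each coset `r + K` by `v ↦ χ (v - r)` is then proper.
-/

open Finset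

theorem Int.cast_sq_zmod_four (a : ℤ) : (a : ZMod 4) ^ 2 = if Even a then 0 else 1 := by
  rcases Int.even_or_odd' a with ⟨k, rfl | rfl⟩
  · simp only [even_two_mul, ↓reduceIte, Int.cast_mul, Int.cast_ofNat]
    generalize (k : ZMod 4) = z
    revert z; decide
  · simp only [Int.not_even_two_mul_add_one, ↓reduceIte, Int.cast_add, Int.cast_mul,
      Int.cast_ofNat, Int.cast_one]
    generalize (k : ZMod 4) = z
    revert z; decide

theorem Int.even_of_sum_sq_eq_sq {ι : Type*} [Fintype ι] (hι : Fintype.card ι < 4)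
    {A : ι → ℤ} {D : ℤ} (h : ∑ i, A i ^ 2 = D ^ 2) (hD : Even D) (i : ι) : Even (A i) := by
  classical
  have hmod : ((#{i | ¬Even (A i)} : ℕ) : ZMod 4) = 0 := by
    have := congrArg (Int.cast : ℤ → ZMod 4) h
    push_cast at this
    simpa [Int.cast_sq_zmod_four, hD, sum_ite, sum_const] using this
  have hcard : #{i | ¬Even (A i)} = 0 := by
    rw [ZMod.natCast_eq_zero_iff] at hmod
    have := (card_filter_le univ fun i => ¬Even (A i)).trans_lt hι
    omega
  simpa using filter_eq_empty_iff.1 (card_eq_zero.1 hcard) (mem_univ i)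

theorem Rat.odd_den_and_num_eq_of_mul_eq {x : ℚ} {D : ℕ} {A : ℤ} (hD : Odd D) (h : x * D = A) :
    Odd x.den ∧ (x.num : ZMod 2) = A := by
  have hD0 : (D : ℚ) ≠ 0 := by exact_mod_cast hD.pos.ne'
  have hden : Odd x.den := by
    have hx : x = Rat.divInt A D := by
      rw [Rat.divInt_eq_div, ← h, Int.cast_natCast, mul_div_cancel_right₀ _ hD0]
    exact hD.of_dvd_nat (Int.natCast_dvd_natCast.1 (hx ▸ Rat.den_dvd A D))
  refine ⟨hden, ?_⟩
  have hnum : x.num * D = A * x.den := by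
    have : (x.num : ℚ) * D = A * x.den := by rw [← h, ← Rat.mul_den_eq_num]; ring
    exact_mod_cast this
  simpa [hD.natCast_zmod_two, hden.natCast_zmod_two] using congrArg (Int.cast : ℤ → ZMod 2) hnum

theorem Rat.odd_den_add_and_num_add {x y : ℚ} (hx : Odd x.den) (hy : Odd y.den) :
    Odd (x + y).den ∧ ((x + y).num : ZMod 2) = x.num + y.num := by
  have hxy : (x + y) * (x.den * y.den : ℕ) = (x.num * y.den + y.num * x.den : ℤ) := by
    push_cast
    linear_combination (y.den : ℚ) * x.mul_den_eq_num + (x.den : ℚ) * y.mul_den_eq_num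
  have h := Rat.odd_den_and_num_eq_of_mul_eq (hx.mul hy) hxy
  push_cast [hx.natCast_zmod_two, hy.natCast_zmod_two, mul_one] at h
  exact h

theorem Rat.exists_mul_prod_den_eq_intCast {ι : Type*} [Fintype ι] (x : ι → ℚ) (i : ι) :
    ∃ a : ℤ, x i * (∏ j, (x j).den : ℕ) = a := by
  classical
  refine ⟨(x i).num * ∏ j ∈ univ.erase i, ((x j).den : ℤ), ?_⟩
  rw [← mul_prod_erase univ _ (mem_univ i)]
  push_cast
  rw [← mul_assoc, Rat.mul_den_eq_num]

theorem sum_sq_eq_sq_of_sum_sq_eq_one {ι : Type*} [Fintype ι] {x : ι → ℚ}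
    (hx : ∑ i, x i ^ 2 = 1) {D : ℕ} {A : ι → ℤ} (hA : ∀ i, x i * D = A i) :
    ∑ i, A i ^ 2 = (D : ℤ) ^ 2 := by
  have : ∑ i, (A i : ℚ) ^ 2 = (D : ℚ) ^ 2 := by
    simp only [← hA, mul_pow, ← sum_mul, hx, one_mul]
  exact_mod_cast this

/-- The least common denominator works: were it even, all the numerators would be even by
`Int.even_of_sum_sq_eq_sq`, and half of it would do. -/
theorem exists_odd_common_den_of_sum_sq_eq_one {ι : Type*} [Fintype ι]
    (hι : Fintype.card ι < 4) {x : ι → ℚ} (hx : ∑ i, x i ^ 2 = 1) :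
    ∃ D : ℕ, Odd D ∧ ∃ A : ι → ℤ, ∀ i, x i * D = A i := by
  classical
  have hex : ∃ D : ℕ, 0 < D ∧ ∀ i, ∃ a : ℤ, x i * D = a :=
    ⟨_, prod_pos fun j _ => (x j).den_pos, Rat.exists_mul_prod_den_eq_intCast x⟩
  obtain ⟨hpos, hA⟩ := Nat.find_spec hex
  choose A hA using hA
  refine ⟨Nat.find hex, Nat.not_even_iff_odd.1 fun ⟨m, hm⟩ => ?_, A, hA⟩
  have hhalf (i : ι) : ∃ a : ℤ, x i * m = a := by
    obtain ⟨a, ha⟩ := Int.even_of_sum_sq_eq_sq hι (sum_sq_eq_sq_of_sum_sq_eq_one hx hA)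
      ⟨m, by push_cast [hm]; rfl⟩ i
    refine ⟨a, ?_⟩
    have hAi := hA i
    rw [hm, ha] at hAi
    push_cast at hAi
    linarith
  exact Nat.find_min hex (by omega : m < Nat.find hex) ⟨by omega, hhalf⟩

theorem odd_den_and_sum_num_eq_one_of_sum_sq_eq_one {ι : Type*} [Fintype ι]
    (hι : Fintype.card ι < 4) {x : ι → ℚ} (hx : ∑ i, x i ^ 2 = 1) :
    (∀ i, Odd (x i).den) ∧ ∑ i, ((x i).num : ZMod 2) = 1 := by
  obtain ⟨D, hD, A, hA⟩ := exists_odd_common_den_of_sum_sq_eq_one hι hx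
  have hparity i := Rat.odd_den_and_num_eq_of_mul_eq hD (hA i)
  refine ⟨fun i => (hparity i).1, ?_⟩
  have := congrArg (Int.cast : ℤ → ZMod 2) (sum_sq_eq_sq_of_sum_sq_eq_one hx hA)
  push_cast at this
  simpa [ZMod.pow_card, hparity, hD.natCast_zmod_two] using this

/-- Along an edge both ends share the representative `r` of their coset of `K`, so their colours
`χ (u - r)` and `χ (v - r)` differ by `χ (u - v) ≠ 0`. -/
noncomputable def SimpleGraph.Coloring.ofAddMonoidHom {G M : Type*} [AddCommGroup G] [AddGroup M]
    (Γ : SimpleGraph G) (K : AddSubgroup G) (χ : K →+ M)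
    (hΓ : ∀ ⦃u v⦄, Γ.Adj u v → ∃ h : u - v ∈ K, χ ⟨u - v, h⟩ ≠ 0) : Γ.Coloring M :=
  Coloring.mk (fun v => χ ⟨v - (v : G ⧸ K).out, (QuotientAddGroup.eq_iff_sub_mem).1
      (QuotientAddGroup.out_eq' (v : G ⧸ K)).symm⟩) fun {u v} huv hχ => by
    obtain ⟨hK, hne⟩ := hΓ huv
    have hrep : (u : G ⧸ K).out = (v : G ⧸ K).out := by
      rw [QuotientAddGroup.eq_iff_sub_mem.2 hK]
    apply hne
    simp only [hrep] at hχ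
    rw [← sub_eq_zero, ← map_sub] at hχ
    convert hχ using 2
    ext
    simp

def oddDenVectors (ι : Type*) : AddSubgroup (ι → ℚ) where
  carrier := {v | ∀ i, Odd (v i).den}
  zero_mem' _ := odd_one
  add_mem' hv hw i := (Rat.odd_den_add_and_num_add (hv i) (hw i)).1
  neg_mem' hv i := by simpa using hv i

def oddDenVectors.numParity (ι : Type*) [Fintype ι] : oddDenVectors ι →+ ZMod 2 where
  toFun v := ∑ i, ((v : ι → ℚ) i).num
  map_zero' := by simp
  map_add' v w := by
    simp only [← sum_add_distrib]
    exact sum_congr rfl fun i _ => (Rat.odd_den_add_and_num_add (v.2 i) (w.2 i)).2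

theorem QQ3.sum_sq_sub_eq_one {u v : Fin 3 → ℚ} (h : QQ3.Adj u v) : ∑ i, (u - v) i ^ 2 = 1 := by
  obtain ⟨-, h | h⟩ := SimpleGraph.fromRel_adj _ u v |>.1 h
  · exact h
  · simpa only [Pi.sub_apply, ← neg_sub (v _), neg_sq] using h

noncomputable def QQ3.coloring : QQ3.Coloring (ZMod 2) :=
  .ofAddMonoidHom QQ3 (oddDenVectors (Fin 3)) (oddDenVectors.numParity (Fin 3)) fun _ _ huv =>
    have h := odd_den_and_sum_num_eq_one_of_sum_sq_eq_one (by simp) (QQ3.sum_sq_sub_eq_one huv)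
    ⟨h.1, h.2.trans_ne one_ne_zero⟩

theorem QQ3.adj_single_zero : QQ3.Adj (Pi.single 0 1) 0 := by
  rw [QQ3, SimpleGraph.fromRel_adj]
  refine ⟨by simp, Or.inl ?_⟩
  simp [Fin.sum_univ_three]

/-- Benda–Perles: `ℚ³` has a proper 2-coloring, hence `χ(ℚ³) = 2`. -/
theorem chromatic_number_Q3 : QQ3.Colorable 2 ∧ QQ3.chromaticNumber = 2 := by
  have hcol : QQ3.Colorable 2 := by simpa using QQ3.coloring.colorable
  exact ⟨hcol, le_antisymm (by exact_mod_cast hcol.chromaticNumber_le)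
    (SimpleGraph.two_le_chromaticNumber_of_adj QQ3.adj_single_zero)⟩
end
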